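/- arXiv:1503.01086 — 6 statements merged into one kernel-verified Lean document; each statement's English description precedes it below -/
import Mathlib

section
/- For every integer a ≥ 1, the equation a_n = a has infinitely many solutions n; that is, the set {n ≥ 1 : a_n = a} is infinite. -/
open Finset Filter Asymptotics

/-- `a n` is the smallest positive integer such that `n + a n` is prime. -/
noncomputable def a (n : ℕ) : ℕ := sInf {k : ℕ | 0 < k ∧ (n + k).Prime}

/-- `p k` is the `k`-th prime (1-indexed, so `p 1 = 2`). -/
noncomputable def p (k : ℕ) : ℕ := Nat.nth Nat.Prime (k - 1)

/-!
Since `j ∣ M ! + j` for `2 ≤ j ≤ M`, the first prime `q` after `M ! + 1` is preceded by at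
least `M - 1` composites. For `A < M` the number `n = q - A` therefore has `a n = A`, and letting
`M` grow gives infinitely many such `n`.
-/

open Nat

theorem Nat.not_prime_factorial_add {m j : ℕ} (hj : 2 ≤ j) (hjm : j ≤ m) : ¬ (m ! + j).Prime :=
  not_prime_of_dvd_of_lt ((dvd_factorial (by omega) hjm).add dvd_rfl) hj
    (by have := factorial_pos m; omega)

theorem Nat.exists_prime_gap (N m : ℕ) :
    ∃ n, N < n ∧ (n + m).Prime ∧ ∀ k < m, ¬ (n + k).Prime := by
  set M := N + m + 1
  have hex : ∃ q, M ! + 2 ≤ q ∧ q.Prime := exists_infinite_primes _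
  obtain ⟨hq, hqp⟩ := Nat.find_spec hex
  set q := Nat.find hex
  have hqM : M ! + M < q := by
    by_contra! h
    have hq' : M ! + (q - M !) = q := by omega
    exact not_prime_factorial_add (j := q - M !) (by omega) (by omega) (hq' ▸ hqp)
  have hMN : N < M ! := lt_of_lt_of_le (by omega) (self_le_factorial M)
  refine ⟨q - m, by omega, by rwa [Nat.sub_add_cancel (by omega)], fun k hk hkp => ?_⟩
  exact Nat.find_min hex (m := q - m + k) (by omega) ⟨by omega, hkp⟩

theorem a_eq_of_prime_add {n k : ℕ} (hk : 0 < k) (hp : (n + k).Prime)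
    (hmin : ∀ j, 0 < j → j < k → ¬ (n + j).Prime) : a n = k :=
  le_antisymm (Nat.sInf_le ⟨hk, hp⟩) <|
    le_csInf ⟨k, hk, hp⟩ fun j ⟨hj, hjp⟩ => not_lt.1 fun hjk => hmin j hj hjk hjp

theorem stmt_2 : ∀ A : ℕ, 1 ≤ A → {n : ℕ | 1 ≤ n ∧ a n = A}.Infinite := by
  intro A hA
  refine Set.infinite_of_forall_exists_gt fun N => ?_
  obtain ⟨n, hNn, hp, hgap⟩ := exists_prime_gap N A
  exact ⟨n, ⟨by omega, a_eq_of_prime_add hA hp fun j _ hj => hgap j hj⟩, hNn⟩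
end

section
/- For every prime n ≥ 3, the sum S_n = Σ_{i=1}^{n} a_i satisfies 2·S_n = 2·p_{π(n)+1} − p_{π(n)} + Σ_{k=1}^{π(n)−1} (p_{k+1} − p_k)^2. -/
open Finset Filter Asymptotics

/-! Since `i + a i` is the least prime exceeding `i`, on a prime gap `[q, q')` the values of `a`
run through `q' - q, …, 1`, so twice their sum is `g² + g` with `g = q' - q`. Summing over the gaps
below `n = p_k`, together with `a 1 = 1`, the linear terms telescope:
`2 (a 1 + ⋯ + a (n - 1)) = n + Σ g²`. Adding `2 a n = 2 (p_{k+1} - n)` gives the formula. -/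

open Nat (nth count)
open scoped Nat.Prime

theorem Nat.count_add_one_eq_of_nth_le_of_lt_nth {P : ℕ → Prop} [DecidablePred P]
    (hP : (Set.ofPred P).Infinite) {i j : ℕ} (hji : nth P j ≤ i) (hij : i < nth P (j + 1)) :
    count P (i + 1) = j + 1 := by
  refine le_antisymm ((Nat.count_le_iff_le_nth hP).2 hij) (Nat.not_lt.1 fun h => ?_)
  have := (Nat.count_le_iff_le_nth hP).1 (Nat.le_of_lt_succ h)
  omega

theorem two_mul_sum_Ico_sub {m q : ℕ} (hmq : m ≤ q) :
    2 * ∑ i ∈ Ico m q, ((q : ℤ) - i) = ((q : ℤ) - m) * ((q : ℤ) - m + 1) := by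
  induction q, hmq using Nat.le_induction with
  | base => simp
  | succ q hmq ih =>
    have hshift : ∑ i ∈ Ico m q, (((q + 1 : ℕ) : ℤ) - i) =
        ∑ i ∈ Ico m q, ((q : ℤ) - i) + (q - m) := by
      simp only [Nat.cast_add, Nat.cast_one, add_sub_right_comm _ (1 : ℤ), sum_add_distrib,
        sum_const, Nat.card_Ico, nsmul_one, Nat.cast_sub hmq]
    rw [sum_Ico_succ_top (by omega), hshift]
    push_cast
    linear_combination ih

theorem add_a_eq_nth_primeCounting (n : ℕ) : n + a n = nth Nat.Prime (π n) := by
  have hN : nth Nat.Prime (π n) = sInf {i | i.Prime ∧ n + 1 ≤ i} :=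
    Nat.nth_count_eq_sInf _ (n + 1)
  obtain ⟨q, hnq, hq⟩ := Nat.exists_infinite_primes (n + 1)
  have hne : {i | i.Prime ∧ n + 1 ≤ i}.Nonempty := ⟨q, hq, hnq⟩
  obtain ⟨hNprime, hnN⟩ := hN ▸ Nat.sInf_mem hne
  have hmem : nth Nat.Prime (π n) - n ∈ {k | 0 < k ∧ (n + k).Prime} :=
    ⟨by omega, by rwa [Nat.add_sub_cancel' (by omega)]⟩
  suffices a n = nth Nat.Prime (π n) - n by omega
  refine le_antisymm (Nat.sInf_le hmem) (le_csInf ⟨_, hmem⟩ fun k ⟨_, hnk⟩ => ?_)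
  have : nth Nat.Prime (π n) ≤ n + k := hN ▸ Nat.sInf_le ⟨hnk, by omega⟩
  omega

theorem primeCounting_eq_of_nth_le_of_lt_nth {i j : ℕ} (hji : nth Nat.Prime j ≤ i)
    (hij : i < nth Nat.Prime (j + 1)) : π i = j + 1 :=
  Nat.count_add_one_eq_of_nth_le_of_lt_nth Nat.infinite_setOfPred_prime hji hij

theorem two_mul_sum_Ico_a {m q : ℕ} (hmq : m ≤ q) (hq : ∀ i ∈ Ico m q, i + a i = q) :
    2 * ∑ i ∈ Ico m q, (a i : ℤ) = ((q : ℤ) - m) * ((q : ℤ) - m + 1) := by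
  rw [← two_mul_sum_Ico_sub hmq, sum_congr rfl fun i hi => ?_]
  rw [← hq i hi]
  push_cast
  ring

theorem two_mul_sum_Ico_one_nth_prime_a (j : ℕ) :
    2 * ∑ i ∈ Ico 1 (nth Nat.Prime j), (a i : ℤ) =
      nth Nat.Prime j + ∑ k ∈ range j, ((nth Nat.Prime (k + 1) : ℤ) - nth Nat.Prime k) ^ 2 := by
  induction j with
  | zero =>
    rw [Nat.nth_prime_zero_eq_two, two_mul_sum_Ico_a (by norm_num) fun i hi => ?_]
    · norm_num
    · obtain rfl : i = 1 := by simpa using hi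
      rw [add_a_eq_nth_primeCounting, Nat.primeCounting_one, Nat.nth_prime_zero_eq_two]
  | succ j ih =>
    have hlt : nth Nat.Prime j < nth Nat.Prime (j + 1) :=
      Nat.nth_strictMono Nat.infinite_setOfPred_prime j.lt_succ_self
    have hgap : 2 * ∑ i ∈ Ico (nth Nat.Prime j) (nth Nat.Prime (j + 1)), (a i : ℤ) =
        ((nth Nat.Prime (j + 1) : ℤ) - nth Nat.Prime j) *
          ((nth Nat.Prime (j + 1) : ℤ) - nth Nat.Prime j + 1) :=
      two_mul_sum_Ico_a hlt.le fun i hi => by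
        rw [mem_Ico] at hi
        rw [add_a_eq_nth_primeCounting, primeCounting_eq_of_nth_le_of_lt_nth hi.1 hi.2]
    rw [← sum_Ico_consecutive _ (by linarith [Nat.add_two_le_nth_prime j]) hlt.le, mul_add, ih,
      hgap, sum_range_succ]
    ring

theorem stmt_3 : ∀ n : ℕ, n.Prime → 3 ≤ n →
    2 * (∑ i ∈ Finset.Icc 1 n, (a i : ℤ)) =
      2 * (p (Nat.primeCounting n + 1) : ℤ) - (p (Nat.primeCounting n) : ℤ) +
        ∑ k ∈ Finset.Icc 1 (Nat.primeCounting n - 1), ((p (k + 1) : ℤ) - (p k : ℤ)) ^ 2 := by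
  intro n hn _
  obtain ⟨j, rfl⟩ : ∃ j, nth Nat.Prime j = n := ⟨_, Nat.nth_count hn⟩
  have hπ : π (nth Nat.Prime j) = j + 1 := primeCounting_eq_of_nth_le_of_lt_nth le_rfl
    (Nat.nth_strictMono Nat.infinite_setOfPred_prime j.lt_succ_self)
  have hnext := add_a_eq_nth_primeCounting (nth Nat.Prime j)
  rw [hπ] at hnext
  have hshift : ∑ k ∈ Icc 1 j, ((p (k + 1) : ℤ) - p k) ^ 2 =
      ∑ k ∈ range j, ((nth Nat.Prime (k + 1) : ℤ) - nth Nat.Prime k) ^ 2 := by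
    rw [← Ico_add_one_right_eq_Icc, sum_Ico_eq_sum_range, Nat.add_sub_cancel]
    simp [p, add_comm 1]
  rw [hπ, Nat.add_sub_cancel, hshift, ← Ico_add_one_right_eq_Icc,
    sum_Ico_succ_top (by linarith [Nat.add_two_le_nth_prime j]), mul_add,
    two_mul_sum_Ico_one_nth_prime_a]
  simp only [p, Nat.add_sub_cancel]
  omega
end

section
/- For every prime n ≥ 3, the product P_{n−1} = Π_{i=1}^{n−1} a_i equals Π_{k=1}^{π(n)−1} (p_{k+1} − p_k)!. -/
open Finset Filter Asymptotics

/-!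
Between two consecutive primes `q < q'` every `i ∈ [q, q')` has `a i = q' - i`, so the block
`∏_{q ≤ i < q'} a i` is `(q' - q)!`. Cutting `[1, n)` at the primes below the prime `n` turns
`P_{n-1}` into the product of the factorials of the prime gaps.
-/

open Nat

lemma a_eq_sub_of_forall_not_prime {i q : ℕ} (hq : q.Prime) (hiq : i < q)
    (hgap : ∀ j, i < j → j < q → ¬ j.Prime) : a i = q - i := by
  have hmem : q - i ∈ {k : ℕ | 0 < k ∧ (i + k).Prime} :=
    ⟨by omega, by rwa [Nat.add_sub_cancel' hiq.le]⟩
  refine le_antisymm (Nat.sInf_le hmem) (le_csInf ⟨_, hmem⟩ ?_)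
  rintro k ⟨hk, hprime⟩
  by_contra! hlt
  exact hgap (i + k) (by omega) (by omega) hprime

lemma prod_Ico_sub_eq_factorial {m n : ℕ} (h : m ≤ n) : ∏ i ∈ Ico m n, (n - i) = (n - m)! := by
  have := prod_Ico_reflect (fun j => j) m n.le_succ
  rw [Nat.add_sub_cancel_left, Nat.sub_add_comm h] at this
  exact this.trans (prod_Ico_id_eq_factorial (n - m))

lemma prod_a_Ico_of_forall_not_prime {q q' : ℕ} (hq' : q'.Prime) (hqq' : q ≤ q')
    (hgap : ∀ j, q < j → j < q' → ¬ j.Prime) : ∏ i ∈ Ico q q', a i = (q' - q)! := by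
  rw [← prod_Ico_sub_eq_factorial hqq']
  refine prod_congr rfl fun i hi => ?_
  rw [mem_Ico] at hi
  exact a_eq_sub_of_forall_not_prime hq' hi.2 fun j hij => hgap j (by omega)

lemma nth_prime_succ_le_of_lt {m j : ℕ} (hj : j.Prime) (h : nth Nat.Prime m < j) :
    nth Nat.Prime (m + 1) ≤ j := by
  have hm : m < count Nat.Prime j := (lt_nth_iff_count_lt infinite_setOfPred_prime).2 h
  calc nth Nat.Prime (m + 1) ≤ nth Nat.Prime (count Nat.Prime j) :=
        (nth_le_nth infinite_setOfPred_prime).2 hm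
    _ = j := nth_count hj

lemma prod_a_Ico_one_nth_prime (m : ℕ) :
    ∏ i ∈ Ico 1 (nth Nat.Prime m), a i = ∏ k ∈ Icc 1 m, (p (k + 1) - p k)! := by
  induction m with
  | zero =>
    have ha : a 1 = 1 := a_eq_sub_of_forall_not_prime prime_two one_lt_two (by omega)
    simp [nth_prime_zero_eq_two, ha]
  | succ m ih =>
    have hlt : nth Nat.Prime m < nth Nat.Prime (m + 1) :=
      (nth_lt_nth infinite_setOfPred_prime).2 m.lt_succ_self
    have hgap : ∀ j, nth Nat.Prime m < j → j < nth Nat.Prime (m + 1) → ¬ j.Prime :=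
      fun j hmj hj hprime => (nth_prime_succ_le_of_lt hprime hmj).not_gt hj
    rw [← prod_Ico_consecutive _ (prime_nth_prime m).one_lt.le hlt.le, ih,
      prod_a_Ico_of_forall_not_prime (prime_nth_prime _) hlt.le hgap,
      prod_Icc_succ_top (by omega)]
    simp [p]

theorem stmt_5 : ∀ n : ℕ, n.Prime → 3 ≤ n →
    ∏ i ∈ Finset.Icc 1 (n - 1), a i =
      ∏ k ∈ Finset.Icc 1 (Nat.primeCounting n - 1), Nat.factorial (p (k + 1) - p k) := by
  intro n hn _
  obtain ⟨m, rfl⟩ : ∃ m, nth Nat.Prime m = n := ⟨_, nth_count hn⟩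
  have hpi : primeCounting (nth Nat.Prime m) - 1 = m := by
    rw [primeCounting, primeCounting', count_nth_succ_of_infinite infinite_setOfPred_prime,
      Nat.add_sub_cancel]
  have hIcc : Icc 1 (nth Nat.Prime m - 1) = Ico 1 (nth Nat.Prime m) := by
    have := (prime_nth_prime m).one_lt
    ext; simp only [mem_Icc, mem_Ico]; omega
  rw [hpi, hIcc, prod_a_Ico_one_nth_prime]
end

section
/- There exists a constant c > 0 such that for all sufficiently large x, Σ_{n ≤ x} a_n ≥ c · x · log x. -/
open Finset Filter Asymptotics

/-!
If `π m = π n` then `m < n + a n`, because `n + a n` is a prime exceeding `n`. Hence within a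
fibre of the prime-counting function on `[1, N]` each `n` has at most `a n` fibre-mates `m ≥ n`,
so `∑_{n ≤ N} a n` is at least half the sum of the squared fibre sizes, which by Cauchy–Schwarz is
at least `N² / (π N + 1)`. Chebyshev's bound `π N ≪ N / log N` turns this into `≫ N log N`.
-/

open scoped Nat.Prime

namespace Finset

variable {α β : Type*} [DecidableEq β] (s : Finset α) (f : α → β)

theorem sq_card_le_card_image_mul_sum_card_fiber :
    #s ^ 2 ≤ #(s.image f) * ∑ n ∈ s, #{m ∈ s | f m = f n} :=
  calc #s ^ 2 = (∑ b ∈ s.image f, #{m ∈ s | f m = b}) ^ 2 := by rw [← card_eq_sum_card_image]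
    _ ≤ #(s.image f) * ∑ b ∈ s.image f, #{m ∈ s | f m = b} ^ 2 := sq_sum_le_card_mul_sum_sq
    _ = #(s.image f) * ∑ n ∈ s, #{m ∈ s | f m = f n} := by
      rw [sum_comp (fun b ↦ #{m ∈ s | f m = b}) f]
      simp only [smul_eq_mul, sq]

theorem sum_card_fiber_le_two_mul_sum_card_upper_fiber [LinearOrder α] :
    ∑ n ∈ s, #{m ∈ s | f m = f n} ≤ 2 * ∑ n ∈ s, #{m ∈ s | n ≤ m ∧ f m = f n} := by
  have lower_eq_upper : ∑ n ∈ s, #{m ∈ s | m ≤ n ∧ f m = f n}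
      = ∑ n ∈ s, #{m ∈ s | n ≤ m ∧ f m = f n} := by
    simp_rw [card_filter]
    rw [sum_comm]
    exact sum_congr rfl fun _ _ ↦ sum_congr rfl fun _ _ ↦ by simp only [eq_comm]
  calc ∑ n ∈ s, #{m ∈ s | f m = f n}
      ≤ ∑ n ∈ s, (#{m ∈ s | n ≤ m ∧ f m = f n} + #{m ∈ s | m ≤ n ∧ f m = f n}) := by
        gcongr with n
        exact (card_le_card fun m hm ↦ by grind).trans (card_union_le _ _)
    _ = 2 * ∑ n ∈ s, #{m ∈ s | n ≤ m ∧ f m = f n} := by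
        rw [sum_add_distrib, lower_eq_upper, two_mul]

end Finset

theorem a_spec (n : ℕ) : 0 < a n ∧ (n + a n).Prime := by
  obtain ⟨q, hnq, hq⟩ := Nat.exists_infinite_primes (n + 1)
  exact Nat.sInf_mem (s := {k | 0 < k ∧ (n + k).Prime})
    ⟨q - n, by omega, by rwa [Nat.add_sub_cancel' (by omega)]⟩

theorem Nat.primeCounting_lt_primeCounting_of_prime {n q : ℕ} (hq : q.Prime) (hnq : n < q) :
    π n < π q :=
  calc Nat.count Nat.Prime (n + 1) ≤ Nat.count Nat.Prime q := Nat.count_monotone _ hnq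
    _ < Nat.count Nat.Prime (q + 1) := Nat.count_strict_mono hq q.lt_succ_self

theorem lt_add_a_of_primeCounting_eq {m n : ℕ} (h : π m = π n) : m < n + a n := by
  by_contra! hm
  obtain ⟨ha, hprime⟩ := a_spec n
  exact (Nat.primeCounting_lt_primeCounting_of_prime hprime (by omega)).trans_le
    (Nat.monotone_primeCounting hm) |>.ne' h

theorem card_upper_fiber_primeCounting_le_a (s : Finset ℕ) (n : ℕ) :
    #{m ∈ s | n ≤ m ∧ π m = π n} ≤ a n :=
  calc #{m ∈ s | n ≤ m ∧ π m = π n} ≤ #(Ico n (n + a n)) :=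
        card_le_card fun m hm ↦ by
          simp only [mem_filter, mem_Ico] at hm ⊢
          exact ⟨hm.2.1, lt_add_a_of_primeCounting_eq hm.2.2⟩
    _ = a n := by simp

theorem sq_le_two_mul_primeCounting_add_one_mul_sum_a (N : ℕ) :
    N ^ 2 ≤ 2 * (π N + 1) * ∑ n ∈ Icc 1 N, a n := by
  have card_image : #((Icc 1 N).image Nat.primeCounting) ≤ π N + 1 :=
    calc _ ≤ #(range (π N + 1)) := card_le_card fun v hv ↦ by
          obtain ⟨n, hn, rfl⟩ := mem_image.mp hv
          exact mem_range_succ_iff.mpr (Nat.monotone_primeCounting (mem_Icc.mp hn).2)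
      _ = π N + 1 := card_range _
  calc N ^ 2 = #(Icc 1 N) ^ 2 := by simp
    _ ≤ #((Icc 1 N).image Nat.primeCounting) * ∑ n ∈ Icc 1 N, #{m ∈ Icc 1 N | π m = π n} :=
        sq_card_le_card_image_mul_sum_card_fiber _ _
    _ ≤ (π N + 1) * (2 * ∑ n ∈ Icc 1 N, #{m ∈ Icc 1 N | n ≤ m ∧ π m = π n}) :=
        Nat.mul_le_mul card_image (sum_card_fiber_le_two_mul_sum_card_upper_fiber _ _)
    _ ≤ (π N + 1) * (2 * ∑ n ∈ Icc 1 N, a n) := by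
        gcongr with n
        exact card_upper_fiber_primeCounting_le_a _ n
    _ = 2 * (π N + 1) * ∑ n ∈ Icc 1 N, a n := by ring

theorem mul_log_le_of_primeCounting_floor_le {C x : ℝ} (hx : 2 ≤ x)
    (hπ : π ⌊x⌋₊ ≤ C * x / Real.log x) :
    x * Real.log x ≤ 16 * C * ∑ n ∈ Icc 1 ⌊x⌋₊, (a n : ℝ) := by
  set N := ⌊x⌋₊
  have hsq : (N : ℝ) ^ 2 ≤ 2 * (π N + 1) * ∑ n ∈ Icc 1 N, (a n : ℝ) := by
    exact_mod_cast sq_le_two_mul_primeCounting_add_one_mul_sum_a N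
  set S := ∑ n ∈ Icc 1 N, (a n : ℝ)
  have hN : 2 ≤ N := Nat.le_floor (by exact_mod_cast hx)
  have hxN : x / 2 ≤ N := by
    have := Nat.lt_floor_add_one x
    have : (2 : ℝ) ≤ N := by exact_mod_cast hN
    linarith
  have hπ_pos : (1 : ℝ) ≤ π N := by
    exact_mod_cast Nat.one_le_iff_ne_zero.mpr (Nat.primeCounting_eq_zero_iff.not.mpr (by omega))
  have hlog : 0 < Real.log x := Real.log_pos (by linarith)
  have hπ_log : π N * Real.log x ≤ C * x := (le_div_iff₀ hlog).mp hπ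
  have hS : 0 ≤ S := by positivity
  have key : x * (x * Real.log x) ≤ x * (16 * C * S) :=
    calc x * (x * Real.log x) = 4 * (x / 2) ^ 2 * Real.log x := by ring
      _ ≤ 4 * N ^ 2 * Real.log x := by gcongr
      _ ≤ 4 * (2 * (π N + 1) * S) * Real.log x := by gcongr
      _ ≤ 16 * S * (π N * Real.log x) := by
          nlinarith [mul_nonneg (sub_nonneg.mpr hπ_pos) (mul_nonneg hS hlog.le)]
      _ ≤ 16 * S * (C * x) := by gcongr
      _ = x * (16 * C * S) := by ring
  exact le_of_mul_le_mul_left key (by linarith)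

theorem stmt_7 : ∃ c : ℝ, 0 < c ∧ ∀ᶠ x : ℝ in atTop,
    c * x * Real.log x ≤ ∑ n ∈ Finset.Icc 1 ⌊x⌋₊, (a n : ℝ) := by
  refine ⟨1 / (16 * (Real.log 4 + 1)), by positivity, ?_⟩
  filter_upwards [eventually_ge_atTop 2, Chebyshev.eventually_primeCounting_le one_pos]
    with x hx hπ
  have hbound := mul_log_le_of_primeCounting_floor_le hx hπ
  rw [mul_assoc, one_div_mul_eq_div, div_le_iff₀ (by positivity)]
  linarith
end

section
/- Assume that Σ_{p_n ≤ x} (p_{n+1} − p_n)^2 ≪ x (log x)^3. Then Σ_{n ≤ x} a_n ≪ x (log x)^3. -/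
open Finset Filter Asymptotics

/-!
If `p k ≤ n < p (k + 1)`, then `n + a n ≤ p (k + 1)`, so `a n ≤ p (k + 1) - p k`; the gap
`[p k, p (k + 1))` holds `p (k + 1) - p k` integers, so it contributes at most the square of the
gap to `∑ a n`. Every `2 ≤ n ≤ x` lies in such a gap with `k = π n ≤ π x`, hence
`∑_{n ≤ x} a n ≤ 1 + ∑_{k ≤ π x} (p (k + 1) - p k) ^ 2`, and the hypothesis bounds the right side.
-/

lemma a_le_of_prime_add {n m : ℕ} (hm : 0 < m) (hp : (n + m).Prime) : a n ≤ m :=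
  Nat.sInf_le ⟨hm, hp⟩

lemma p_succ (k : ℕ) : p (k + 1) = Nat.nth Nat.Prime k := rfl

lemma p_monotone : Monotone p := fun _ _ h =>
  Nat.nth_monotone Nat.infinite_setOfPred_prime (Nat.sub_le_sub_right h 1)

lemma primeCounting_pos {n : ℕ} (hn : 2 ≤ n) : 0 < n.primeCounting := by
  rw [Nat.pos_iff_ne_zero, Ne, Nat.primeCounting_eq_zero_iff]
  omega

lemma mem_Ico_p_primeCounting {n : ℕ} (hn : 2 ≤ n) :
    n ∈ Ico (p n.primeCounting) (p (n.primeCounting + 1)) := by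
  -- `π n` unfolds to `Nat.count Nat.Prime (n + 1)`.
  have hlower : p n.primeCounting < n + 1 :=
    Nat.nth_lt_of_lt_count (show n.primeCounting - 1 < Nat.count Nat.Prime (n + 1) from
      Nat.sub_lt (primeCounting_pos hn) one_pos)
  have hupper : n + 1 ≤ p (n.primeCounting + 1) := Nat.le_nth_count Nat.infinite_setOfPred_prime _
  rw [mem_Ico]
  omega

lemma a_le_of_mem_Ico_p {k n : ℕ} (hn : n ∈ Ico (p k) (p (k + 1))) :
    a n ≤ p (k + 1) - p k := by
  rw [mem_Ico] at hn
  have hprime : (n + (p (k + 1) - n)).Prime := by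
    rw [Nat.add_sub_cancel' hn.2.le, p_succ]
    exact Nat.prime_nth_prime k
  exact (a_le_of_prime_add (by omega) hprime).trans (by omega)

lemma sum_a_Ico_p_le_sq (k : ℕ) :
    ∑ n ∈ Ico (p k) (p (k + 1)), a n ≤ (p (k + 1) - p k) ^ 2 :=
  calc ∑ n ∈ Ico (p k) (p (k + 1)), a n
      ≤ #(Ico (p k) (p (k + 1))) • (p (k + 1) - p k) :=
        sum_le_card_nsmul _ _ _ fun _ => a_le_of_mem_Ico_p
    _ = (p (k + 1) - p k) ^ 2 := by rw [Nat.card_Ico, smul_eq_mul, sq]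

lemma sum_a_le_one_add_sum_sq_prime_gap (N : ℕ) :
    ∑ n ∈ Icc 1 N, a n ≤ 1 + ∑ k ∈ Icc 1 N.primeCounting, (p (k + 1) - p k) ^ 2 := by
  rcases Nat.eq_zero_or_pos N with rfl | hN
  · simp
  have hsplit : Icc 1 N = insert 1 (Icc 2 N) := by
    ext m
    simp only [mem_Icc, mem_insert]
    omega
  have ha1 : a 1 ≤ 1 := a_le_of_prime_add one_pos Nat.prime_two
  have hmaps : ∀ n ∈ Icc 2 N, n.primeCounting ∈ Icc 1 N.primeCounting := fun n hn => by
    rw [mem_Icc] at hn ⊢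
    exact ⟨primeCounting_pos hn.1, Nat.monotone_primeCounting hn.2⟩
  have hgaps : ∑ n ∈ Icc 2 N, a n ≤ ∑ k ∈ Icc 1 N.primeCounting, (p (k + 1) - p k) ^ 2 := by
    rw [← sum_fiberwise_of_maps_to hmaps]
    refine sum_le_sum fun k _ => (sum_le_sum_of_subset fun n hn => ?_).trans (sum_a_Ico_p_le_sq k)
    obtain ⟨hnN, rfl⟩ := mem_filter.mp hn
    exact mem_Ico_p_primeCounting (mem_Icc.mp hnN).1
  rw [hsplit, sum_insert (by simp)]
  omega

lemma one_le_mul_log_pow_three {x : ℝ} (hx : Real.exp 1 ≤ x) : 1 ≤ x * Real.log x ^ 3 := by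
  have hx1 : 1 ≤ x := (Real.one_le_exp zero_le_one).trans hx
  have hlog : 1 ≤ Real.log x := (Real.le_log_iff_exp_le (by linarith)).mpr hx
  nlinarith [one_le_pow₀ (n := 3) hlog]

theorem stmt_10
    (h : ∃ C : ℝ, 0 < C ∧ ∀ᶠ x : ℝ in atTop,
      ∑ n ∈ Finset.Icc 1 (Nat.primeCounting ⌊x⌋₊), ((p (n + 1) : ℝ) - (p n : ℝ)) ^ 2 ≤
        C * x * Real.log x ^ 3) :
    ∃ C : ℝ, 0 < C ∧ ∀ᶠ x : ℝ in atTop,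
      ∑ n ∈ Finset.Icc 1 ⌊x⌋₊, (a n : ℝ) ≤ C * x * Real.log x ^ 3 := by
  obtain ⟨C, hC, hgaps⟩ := h
  refine ⟨C + 1, by linarith, ?_⟩
  filter_upwards [hgaps, eventually_ge_atTop (Real.exp 1)] with x hx hex
  have hkey : ∑ n ∈ Icc 1 ⌊x⌋₊, (a n : ℝ) ≤
      1 + ∑ k ∈ Icc 1 (Nat.primeCounting ⌊x⌋₊), ((p (k + 1) : ℝ) - (p k : ℝ)) ^ 2 := by
    have := Nat.cast_le (α := ℝ).mpr (sum_a_le_one_add_sum_sq_prime_gap ⌊x⌋₊)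
    push_cast at this
    refine this.trans_eq (congrArg _ (sum_congr rfl fun k _ => ?_))
    rw [Nat.cast_sub (p_monotone k.le_succ)]
  nlinarith [one_le_mul_log_pow_three hex]
end

section
/- For every prime p_m (m ≥ 2), Σ_{n ≤ p_m − 1} 1/a_n = 1 + Σ_{i=2}^m (1 + 1/2 + ⋯ + 1/(p_i − p_{i−1})). -/
open Finset Filter Asymptotics

/-! On the block `p_{i-1} ≤ n < p_i` the next prime is `p_i`, so `a n = p_i - n` runs through
`p_i - p_{i-1}, …, 1` and the block contributes the harmonic number `H (p_i - p_{i-1})`.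
The initial block `n = 1` contributes `1/a 1 = 1`. -/

theorem prime_p (k : ℕ) : (p k).Prime :=
  Nat.prime_nth_prime _

theorem a_eq_sub_of_prime {n q : ℕ} (hq : q.Prime) (hnq : n < q)
    (hgap : ∀ k, n < k → k < q → ¬ k.Prime) : a n = q - n := by
  have hmem : q - n ∈ {k : ℕ | 0 < k ∧ (n + k).Prime} :=
    ⟨by omega, by rwa [Nat.add_sub_cancel' hnq.le]⟩
  refine le_antisymm (Nat.sInf_le hmem) (le_csInf ⟨_, hmem⟩ ?_)
  rintro k ⟨hk, hprime⟩
  by_contra! hlt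
  exact hgap (n + k) (by omega) (by omega) hprime

theorem not_prime_of_nth_lt_of_lt_nth_succ {i k : ℕ} (hi : Nat.nth Nat.Prime i < k)
    (hk : k < Nat.nth Nat.Prime (i + 1)) : ¬ k.Prime := by
  intro hprime
  rw [← Nat.nth_count hprime] at hi hk
  rw [Nat.nth_lt_nth Nat.infinite_setOfPred_prime] at hi hk
  omega

theorem a_eq_nth_prime_succ_sub {i n : ℕ} (hi : Nat.nth Nat.Prime i ≤ n)
    (hn : n < Nat.nth Nat.Prime (i + 1)) : a n = Nat.nth Nat.Prime (i + 1) - n :=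
  a_eq_sub_of_prime (Nat.prime_nth_prime _) hn fun _ hnk hk =>
    not_prime_of_nth_lt_of_lt_nth_succ (hi.trans_lt hnk) hk

theorem a_one : a 1 = 1 :=
  a_eq_sub_of_prime Nat.prime_two one_lt_two fun _ _ _ => by omega

theorem sum_Ico_sub_eq_sum_Icc {M : Type*} [AddCommMonoid M] (f : ℕ → M) {l r : ℕ}
    (hlr : l ≤ r) : ∑ n ∈ Ico l r, f (r - n) = ∑ j ∈ Icc 1 (r - l), f j := by
  rw [sum_Ico_reflect f l (Nat.le_succ r), ← Ico_add_one_right_eq_Icc]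
  congr 2 <;> omega

theorem sum_Ico_nth_prime_one_div_a (i : ℕ) :
    ∑ n ∈ Ico (Nat.nth Nat.Prime i) (Nat.nth Nat.Prime (i + 1)), (1 : ℝ) / a n
      = ∑ j ∈ Icc 1 (Nat.nth Nat.Prime (i + 1) - Nat.nth Nat.Prime i), (1 : ℝ) / j := by
  rw [← sum_Ico_sub_eq_sum_Icc (fun j => (1 : ℝ) / j)
    (Nat.nth_monotone Nat.infinite_setOfPred_prime i.le_succ)]
  refine sum_congr rfl fun n hn => ?_
  rw [a_eq_nth_prime_succ_sub (mem_Ico.1 hn).1 (mem_Ico.1 hn).2]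

theorem sum_Ico_one_p_one_div_a {m : ℕ} (hm : 1 ≤ m) :
    ∑ n ∈ Ico 1 (p m), (1 : ℝ) / a n =
      1 + ∑ i ∈ Icc 2 m, ∑ j ∈ Icc 1 (p i - p (i - 1)), (1 : ℝ) / j := by
  induction m, hm using Nat.le_induction with
  | base => simp [p, a_one]
  | succ m hm ih =>
    have hblock := sum_Ico_nth_prime_one_div_a (m - 1)
    rw [Nat.sub_add_cancel hm] at hblock
    have hmono : p m ≤ p (m + 1) := Nat.nth_monotone Nat.infinite_setOfPred_prime (by omega)
    have hpos : 1 ≤ p m := (prime_p m).one_le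
    rw [← sum_Ico_consecutive _ hpos hmono, ih, sum_Icc_succ_top (by omega : 2 ≤ m + 1)]
    simp only [p, Nat.add_sub_cancel] at hblock ⊢
    rw [hblock, add_assoc]

theorem stmt_14 : ∀ m : ℕ, 2 ≤ m →
    ∑ n ∈ Finset.Icc 1 (p m - 1), (1 : ℝ) / a n =
      1 + ∑ i ∈ Finset.Icc 2 m, ∑ j ∈ Finset.Icc 1 (p i - p (i - 1)), (1 : ℝ) / j := by
  intro m hm
  rw [Icc_sub_one_right_eq_Ico_of_not_isMin (not_isMin_of_lt (prime_p m).pos)]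
  exact sum_Ico_one_p_one_div_a (by omega)
end
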